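/- Fix a factor index i with 1 ≤ i ≤ m−1. Then Yᵀ P_U Y = Yᵀ P_V Y for every Y ∈ ℝⁿ (i.e. SS_{i;all} = SS_{i;m+1} identically, equivalently P_U = P_V) if and only if the proportional-frequency condition of Addelman holds for A_i: X_iᵀ X_j = (1/n)·(X_iᵀ 1_n)·(X_jᵀ 1_n)ᵀ for every j ≠ i with 1 ≤ j ≤ m (i.e. N_{ij} = r_i r_jᵀ / n, where N_{ij} = X_iᵀ X_j and r_i = X_iᵀ 1_n). -/

import Mathlib

open Matrix

/-- The column space of a real `n × p` matrix `A`, as a subspace of Euclidean `ℝⁿ`. -/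
noncomputable def colSpace {n p : ℕ} (A : Matrix (Fin n) (Fin p) ℝ) :
    Submodule ℝ (EuclideanSpace ℝ (Fin n)) :=
  Submodule.span ℝ (Set.range fun t => (WithLp.toLp 2 (fun i => A i t) : EuclideanSpace ℝ (Fin n)))

/-- The orthogonal projection of `ℝⁿ` onto a subspace `S`, as an endomorphism. -/
noncomputable def projS {n : ℕ} (S : Submodule ℝ (EuclideanSpace ℝ (Fin n))) :
    EuclideanSpace ℝ (Fin n) →L[ℝ] EuclideanSpace ℝ (Fin n) :=
  S.subtypeL.comp (S.orthogonalProjectionOnto)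

/-- `(I − P_S)·A`: the matrix whose columns are the residuals of the columns of `A`
after orthogonal projection onto `S`. -/
noncomputable def residualMat {n p : ℕ} (S : Submodule ℝ (EuclideanSpace ℝ (Fin n)))
    (A : Matrix (Fin n) (Fin p) ℝ) : Matrix (Fin n) (Fin p) ℝ := fun i t =>
  A i t - projS S (WithLp.toLp 2 (fun i' => A i' t)) i

/-- The column space of the concatenation `X_{T**}` of all design matrices except the
`i`-th together with the all-ones column (the general mean). -/
noncomputable def spanExcept {n m : ℕ} {c : Fin (m + 1) → ℕ}
    (X : (j : Fin (m + 1)) → Matrix (Fin n) (Fin (c j)) ℝ) (i : Fin (m + 1)) :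
    Submodule ℝ (EuclideanSpace ℝ (Fin n)) :=
  (⨆ j ∈ Finset.univ.erase i, colSpace (X j)) ⊔
    Submodule.span ℝ {(WithLp.toLp 2 (fun _ => (1 : ℝ)) : EuclideanSpace ℝ (Fin n))}
/-!
Let `S` be the span of the other factors and the mean, `L = ℝ ∙ 1 ≤ S`, and let `U`, `V` be
the residuals of `X_i` after projecting onto `S` and onto `L`. Equal quadratic forms of the
projections mean `col U = col V`. As `col U ⊥ S` always, this forces `col V ⊥ S`; conversely
`V ⊥ S` means that `P_L` already is the projection onto `S` of each column of `X_i`, so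
`U = V`. Since `V ⊥ 1` automatically, `V ⊥ S` says `Vᵀ X_j = 0` for `j ≠ i`, and
`Vᵀ X_j = X_iᵀ X_j - r_i r_jᵀ / n`.
-/

open Submodule
open scoped InnerProductSpace

section Projection

variable {𝕜 E : Type*} [RCLike 𝕜] [NormedAddCommGroup E] [InnerProductSpace 𝕜 E]

theorem Submodule.forall_inner_starProjection_self_eq_iff {U V : Submodule 𝕜 E}
    [U.HasOrthogonalProjection] [V.HasOrthogonalProjection] :
    (∀ x, ⟪x, U.starProjection x⟫_𝕜 = ⟪x, V.starProjection x⟫_𝕜) ↔ U = V := by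
  refine ⟨fun h => starProjection_inj.1 ?_, fun h _ => by subst h; rfl⟩
  have hsymm :
      ((U.starProjection - V.starProjection : E →L[𝕜] E) : E →ₗ[𝕜] E).IsSymmetric :=
    U.starProjection_isSymmetric.sub V.starProjection_isSymmetric
  have hzero := hsymm.inner_map_self_eq_zero.1 fun x => by
    simp only [ContinuousLinearMap.toLinearMap_sub, LinearMap.sub_apply,
      ContinuousLinearMap.coe_coe, inner_sub_left, inner_starProjection_left_eq_right, h, sub_self]
  ext1 x
  simpa [sub_eq_zero] using LinearMap.congr_fun hzero x

theorem Submodule.starProjection_eq_starProjection_of_le_iff {L S : Submodule 𝕜 E}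
    [L.HasOrthogonalProjection] [S.HasOrthogonalProjection] (hLS : L ≤ S) (a : E) :
    S.starProjection a = L.starProjection a ↔ a - L.starProjection a ∈ Sᗮ :=
  ⟨fun h => h ▸ S.sub_starProjection_mem_orthogonal a,
    eq_starProjection_of_mem_orthogonal (hLS (L.starProjection_apply_mem a))⟩

end Projection

section ColumnSpace

variable {n p : ℕ}

theorem projS_eq_starProjection (K : Submodule ℝ (EuclideanSpace ℝ (Fin n))) :
    projS K = K.starProjection :=
  rfl

def matCol (A : Matrix (Fin n) (Fin p) ℝ) (t : Fin p) : EuclideanSpace ℝ (Fin n) :=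
  WithLp.toLp 2 fun r => A r t

theorem colSpace_eq_span_range (A : Matrix (Fin n) (Fin p) ℝ) :
    colSpace A = span ℝ (Set.range (matCol A)) :=
  rfl

theorem colSpace_le_iff {A : Matrix (Fin n) (Fin p) ℝ}
    {K : Submodule ℝ (EuclideanSpace ℝ (Fin n))} :
    colSpace A ≤ K ↔ ∀ t, matCol A t ∈ K := by
  rw [colSpace_eq_span_range, span_le, Set.range_subset_iff]
  rfl

theorem inner_matCol_matCol {q : ℕ} (A : Matrix (Fin n) (Fin p) ℝ)
    (B : Matrix (Fin n) (Fin q) ℝ) (s : Fin p) (t : Fin q) :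
    ⟪matCol A s, matCol B t⟫_ℝ = (Aᵀ * B) s t := by
  simp [matCol, PiLp.inner_apply, mul_apply, mul_comm]

theorem colSpace_isOrtho_colSpace_iff {q : ℕ} (A : Matrix (Fin n) (Fin p) ℝ)
    (B : Matrix (Fin n) (Fin q) ℝ) : colSpace A ⟂ colSpace B ↔ Aᵀ * B = 0 := by
  rw [← Matrix.ext_iff, colSpace_eq_span_range, colSpace_eq_span_range, isOrtho_span]
  simp only [Set.forall_mem_range, inner_matCol_matCol, Matrix.zero_apply]

theorem matCol_residualMat (S : Submodule ℝ (EuclideanSpace ℝ (Fin n)))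
    (A : Matrix (Fin n) (Fin p) ℝ) (t : Fin p) :
    matCol (residualMat S A) t = matCol A t - S.starProjection (matCol A t) :=
  rfl

theorem residualMat_eq_iff {S S' : Submodule ℝ (EuclideanSpace ℝ (Fin n))}
    (A : Matrix (Fin n) (Fin p) ℝ) :
    residualMat S A = residualMat S' A ↔
      ∀ t, S.starProjection (matCol A t) = S'.starProjection (matCol A t) := by
  simp only [← Matrix.ext_iff, residualMat, sub_right_inj]
  rw [forall_comm]
  exact forall_congr' fun t => (PiLp.ext_iff).symm

theorem colSpace_residualMat_le_orthogonal (S : Submodule ℝ (EuclideanSpace ℝ (Fin n)))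
    (A : Matrix (Fin n) (Fin p) ℝ) : colSpace (residualMat S A) ≤ Sᗮ :=
  colSpace_le_iff.2 fun t => S.sub_starProjection_mem_orthogonal (matCol A t)

theorem residualMat_eq_residualMat_of_le_iff {L S : Submodule ℝ (EuclideanSpace ℝ (Fin n))}
    (hLS : L ≤ S) (A : Matrix (Fin n) (Fin p) ℝ) :
    residualMat S A = residualMat L A ↔ colSpace (residualMat L A) ≤ Sᗮ := by
  simp only [residualMat_eq_iff, colSpace_le_iff, matCol_residualMat,
    starProjection_eq_starProjection_of_le_iff hLS]

theorem colSpace_residualMat_eq_of_le_iff {L S : Submodule ℝ (EuclideanSpace ℝ (Fin n))}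
    (hLS : L ≤ S) (A : Matrix (Fin n) (Fin p) ℝ) :
    colSpace (residualMat S A) = colSpace (residualMat L A) ↔
      colSpace (residualMat L A) ≤ Sᗮ :=
  ⟨fun h => h ▸ colSpace_residualMat_le_orthogonal S A,
    fun h => congrArg colSpace ((residualMat_eq_residualMat_of_le_iff hLS A).2 h)⟩

end ColumnSpace

section Mean

variable {n p : ℕ}

def onesVec (n : ℕ) : EuclideanSpace ℝ (Fin n) :=
  WithLp.toLp 2 fun _ => 1

theorem inner_onesVec (v : EuclideanSpace ℝ (Fin n)) : ⟪onesVec n, v⟫_ℝ = ∑ r, v r := by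
  simp [onesVec, PiLp.inner_apply]

theorem norm_onesVec_sq : ‖onesVec n‖ ^ 2 = n := by
  rw [← real_inner_self_eq_norm_sq, inner_onesVec]
  simp [onesVec]

theorem starProjection_span_onesVec (v : EuclideanSpace ℝ (Fin n)) :
    (ℝ ∙ onesVec n).starProjection v = ((∑ r, v r) / n) • onesVec n := by
  rw [starProjection_singleton, inner_onesVec, norm_onesVec_sq]
  rfl

theorem residualMat_span_onesVec (A : Matrix (Fin n) (Fin p) ℝ) :
    residualMat (ℝ ∙ onesVec n) A =
      A - (1 / (n : ℝ)) • vecMulVec (fun _ => 1) (Aᵀ *ᵥ fun _ => 1) := by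
  ext r t
  rw [residualMat, projS_eq_starProjection, starProjection_span_onesVec]
  simp [onesVec, mulVec, dotProduct, vecMulVec_apply, div_eq_inv_mul]

theorem transpose_residualMat_span_onesVec_mul {q : ℕ} (A : Matrix (Fin n) (Fin p) ℝ)
    (B : Matrix (Fin n) (Fin q) ℝ) :
    (residualMat (ℝ ∙ onesVec n) A)ᵀ * B =
      Aᵀ * B - (1 / (n : ℝ)) • vecMulVec (Aᵀ *ᵥ fun _ => 1) (Bᵀ *ᵥ fun _ => 1) := by
  rw [residualMat_span_onesVec, transpose_sub, Matrix.sub_mul, transpose_smul,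
    transpose_vecMulVec, smul_mul, vecMulVec_mul, ← mulVec_transpose]

end Mean

theorem spanExcept_isOrtho_iff {n m : ℕ} {c : Fin (m + 1) → ℕ}
    (X : (j : Fin (m + 1)) → Matrix (Fin n) (Fin (c j)) ℝ) (i : Fin (m + 1))
    (W : Submodule ℝ (EuclideanSpace ℝ (Fin n))) :
    spanExcept X i ⟂ W ↔ (∀ j, j ≠ i → colSpace (X j) ⟂ W) ∧ (ℝ ∙ onesVec n) ⟂ W := by
  simp [spanExcept, onesVec]

theorem ss_all_eq_ss_unadjusted_iff_pfc_general {n m : ℕ} {c : Fin (m + 1) → ℕ}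
    (X : (j : Fin (m + 1)) → Matrix (Fin n) (Fin (c j)) ℝ)
    (i : Fin (m + 1)) :
    (∀ Y : EuclideanSpace ℝ (Fin n),
        (inner ℝ Y (projS (colSpace (residualMat (spanExcept X i) (X i))) Y) : ℝ) =
          (inner ℝ Y (projS (colSpace (residualMat
            (Submodule.span ℝ {(WithLp.toLp 2 (fun _ => (1 : ℝ)) : EuclideanSpace ℝ (Fin n))}) (X i))) Y) : ℝ)) ↔
      ∀ j : Fin (m + 1), j ≠ i →
        (X i)ᵀ * X j =
          (1 / (n : ℝ)) • vecMulVec ((X i)ᵀ *ᵥ fun _ => 1) ((X j)ᵀ *ᵥ fun _ => 1) := by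
  change (∀ Y, _ = ⟪Y, projS (colSpace (residualMat (ℝ ∙ onesVec n) (X i))) Y⟫_ℝ) ↔ _
  set V := residualMat (ℝ ∙ onesVec n) (X i)
  have hLS : (ℝ ∙ onesVec n) ≤ spanExcept X i := le_sup_right
  have hVL : (ℝ ∙ onesVec n) ⟂ colSpace V :=
    IsOrtho.symm (colSpace_residualMat_le_orthogonal _ _)
  simp only [projS_eq_starProjection, forall_inner_starProjection_self_eq_iff]
  rw [colSpace_residualMat_eq_of_le_iff hLS, ← isOrtho_iff_le, isOrtho_comm,
    spanExcept_isOrtho_iff, and_iff_left hVL]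
  refine forall_congr' fun j => imp_congr_right fun _ => ?_
  rw [isOrtho_comm, colSpace_isOrtho_colSpace_iff, transpose_residualMat_span_onesVec_mul,
    sub_eq_zero]

/-- For a blocked main-effect plan with design matrices `X j` (the factor `Fin.last m`
being the block factor) and a treatment factor `i`, the adjusted sum of squares
`SS_{i;all} = Yᵀ P_U Y` (with `U = (I − P_{T**}) X_i`) coincides with the unadjusted sum
of squares `SS_{i;m+1} = Yᵀ P_V Y` (with `V = (I − P_{1_n}) X_i`) for every `Y` if and
only if the proportional-frequency condition of Addelman holds:
`X_iᵀ X_j = (1/n)·r_i·r_jᵀ` for every `j ≠ i`, where `r_j = X_jᵀ 1_n`. -/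
theorem ss_all_eq_ss_unadjusted_iff_pfc {n m : ℕ} {c : Fin (m + 1) → ℕ}
    (X : (j : Fin (m + 1)) → Matrix (Fin n) (Fin (c j)) ℝ)
    (hX01 : ∀ j r t, X j r t = 0 ∨ X j r t = 1)
    (hXrow : ∀ j r, ∑ t, X j r t = 1)
    (hn : 0 < n)
    (i : Fin (m + 1)) (hi : i ≠ Fin.last m) :
    (∀ Y : EuclideanSpace ℝ (Fin n),
        (inner ℝ Y (projS (colSpace (residualMat (spanExcept X i) (X i))) Y) : ℝ) =
          (inner ℝ Y (projS (colSpace (residualMat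
            (Submodule.span ℝ {(WithLp.toLp 2 (fun _ => (1 : ℝ)) : EuclideanSpace ℝ (Fin n))}) (X i))) Y) : ℝ)) ↔
      ∀ j : Fin (m + 1), j ≠ i →
        (X i)ᵀ * X j =
          (1 / (n : ℝ)) • vecMulVec ((X i)ᵀ *ᵥ fun _ => 1) ((X j)ᵀ *ᵥ fun _ => 1) :=
  ss_all_eq_ss_unadjusted_iff_pfc_general X i
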